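/- For binary classification with classifiers h₁, h₂ ∈ H, the error probabilities under the true mixture p and the estimated mixture q satisfy |P_p[error of h] − P_q[error of h]| ≤ (1/2)·d_B(p̃, q̃) whenever the error event {h(z) ≠ y} can be expressed via the disagreement set of two classifiers in H; in particular, if H contains the Bayes-optimal labeling function, then P_p[error of h] ≤ P_q[error of h] + (1/2)·d_B(p, q) + λ, where λ is the sum of the errors of the best joint classifier under p and q. -/

import Mathlib

open MeasureTheory

/-- The B-distance induced by a family `H` of binary classifiers. -/
noncomputable def dB {Z : Type*} [MeasurableSpace Z] (H : Set (Z → Bool))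
    (p q : Measure Z) : ℝ :=
  2 * ⨆ h₁ : H, ⨆ h₂ : H,
    |(p {z | h₁.1 z ≠ h₂.1 z}).toReal - (q {z | h₁.1 z ≠ h₂.1 z}).toReal|

/-!
Take any `h' ∈ H`. By the triangle inequality for disagreement sets,
`p{h ≠ fp} ≤ p{h ≠ h'} + p{h' ≠ fp}` and `q{h ≠ h'} ≤ q{h ≠ fq} + q{h' ≠ fq}`,
while `h, h' ∈ H` gives `p{h ≠ h'} ≤ q{h ≠ h'} + d_B(p, q) / 2`. Chaining these and
taking the infimum over `h'` yields the bound.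
-/

section

variable {Z : Type*} [MeasurableSpace Z]

lemma measureReal_setOf_ne_le_add (μ : Measure Z) [IsFiniteMeasure μ] (a b c : Z → Bool) :
    μ.real {z | a z ≠ c z} ≤ μ.real {z | a z ≠ b z} + μ.real {z | b z ≠ c z} := by
  have hsub : {z | a z ≠ c z} ⊆ {z | a z ≠ b z} ∪ {z | b z ≠ c z} := fun z (hac : a z ≠ c z) =>
    or_iff_not_imp_left.2 fun hab : ¬a z ≠ b z => (not_not.1 hab ▸ hac : b z ≠ c z)
  exact (measureReal_mono hsub).trans (measureReal_union_le _ _)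

lemma abs_measureReal_sub_le (p q : Measure Z) [IsFiniteMeasure p] [IsFiniteMeasure q]
    (s : Set Z) : |p.real s - q.real s| ≤ p.real Set.univ + q.real Set.univ := by
  have hp := measureReal_mono (μ := p) (Set.subset_univ s)
  have hq := measureReal_mono (μ := q) (Set.subset_univ s)
  have := measureReal_nonneg (μ := p) (s := s)
  have := measureReal_nonneg (μ := q) (s := s)
  exact abs_sub_le_iff.2 ⟨by linarith, by linarith⟩

lemma abs_measureReal_disagree_sub_le_half_dB {H : Set (Z → Bool)} (p q : Measure Z)
    [IsFiniteMeasure p] [IsFiniteMeasure q] {h₁ h₂ : Z → Bool} (hh₁ : h₁ ∈ H) (hh₂ : h₂ ∈ H) :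
    |p.real {z | h₁ z ≠ h₂ z} - q.real {z | h₁ z ≠ h₂ z}| ≤ (1 / 2) * dB H p q := by
  set B := p.real Set.univ + q.real Set.univ
  have hB : 0 ≤ B := by positivity
  have hbdd (g₁ : H) :
      BddAbove (Set.range fun g₂ : H =>
        |p.real {z | g₁.1 z ≠ g₂.1 z} - q.real {z | g₁.1 z ≠ g₂.1 z}|) :=
    ⟨B, by rintro _ ⟨g₂, rfl⟩; exact abs_measureReal_sub_le p q _⟩
  have hbdd' : BddAbove (Set.range fun g₁ : H =>
      ⨆ g₂ : H, |p.real {z | g₁.1 z ≠ g₂.1 z} - q.real {z | g₁.1 z ≠ g₂.1 z}|) :=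
    ⟨B, by rintro _ ⟨g₁, rfl⟩; exact Real.iSup_le (fun _ => abs_measureReal_sub_le p q _) hB⟩
  rw [dB, ← mul_assoc, one_div_mul_cancel two_ne_zero, one_mul]
  exact le_ciSup_of_le hbdd' ⟨h₁, hh₁⟩ (le_ciSup_of_le (hbdd _) ⟨h₂, hh₂⟩ le_rfl)

lemma measureReal_error_le_add_half_dB_add {H : Set (Z → Bool)} (p q : Measure Z)
    [IsFiniteMeasure p] [IsFiniteMeasure q] (fp fq : Z → Bool) {h h' : Z → Bool}
    (hh : h ∈ H) (hh' : h' ∈ H) :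
    p.real {z | h z ≠ fp z} ≤ q.real {z | h z ≠ fq z} + (1 / 2) * dB H p q +
      (p.real {z | h' z ≠ fp z} + q.real {z | h' z ≠ fq z}) := by
  have hp := measureReal_setOf_ne_le_add p h h' fp
  have hq := measureReal_setOf_ne_le_add q h fq h'
  rw [show {z | fq z ≠ h' z} = {z | h' z ≠ fq z} from Set.ext fun _ => ne_comm] at hq
  have hpq := (abs_le.1 (abs_measureReal_disagree_sub_le_half_dB p q hh hh')).2
  linarith

end

theorem stmt7_general {Z : Type*} [MeasurableSpace Z] (H : Set (Z → Bool))
    (p q : Measure Z) [IsProbabilityMeasure p] [IsProbabilityMeasure q]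
    (fp fq : Z → Bool)
    (h : Z → Bool) (hh : h ∈ H) :
    (p {z | h z ≠ fp z}).toReal
      ≤ (q {z | h z ≠ fq z}).toReal + (1 / 2) * dB H p q +
        ⨅ h' : H, ((p {z | h'.1 z ≠ fp z}).toReal + (q {z | h'.1 z ≠ fq z}).toReal) := by
  have : Nonempty H := ⟨⟨h, hh⟩⟩
  rw [← sub_le_iff_le_add']
  exact le_ciInf fun h' =>
    sub_le_iff_le_add'.2 (measureReal_error_le_add_half_dB_add p q fp fq hh h'.2)

/-- Domain-adaptation bound for binary classification: if `H` contains the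
(Bayes-optimal) labeling functions `f_p` and `f_q`, then for every `h ∈ H` the
error under `p` is bounded by the error under `q`, plus half the B-distance,
plus the error `λ` of the best joint classifier under `p` and `q`. -/
theorem stmt7 {Z : Type*} [MeasurableSpace Z] (H : Set (Z → Bool))
    (p q : Measure Z) [IsProbabilityMeasure p] [IsProbabilityMeasure q]
    (fp fq : Z → Bool) (hfp : fp ∈ H) (hfq : fq ∈ H)
    (h : Z → Bool) (hh : h ∈ H) :
    (p {z | h z ≠ fp z}).toReal
      ≤ (q {z | h z ≠ fq z}).toReal + (1 / 2) * dB H p q +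
        ⨅ h' : H, ((p {z | h'.1 z ≠ fp z}).toReal + (q {z | h'.1 z ≠ fq z}).toReal) :=
  stmt7_general H p q fp fq h hh
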